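/- Let σ > 0, let x, δ ∈ ℝ^m, let b ∈ ℝ, and let A ⊆ ℝ^m be measurable. If the isotropic Gaussian measure N(x, σ²I) satisfies N(x, σ²I)(A) ≤ Φ(b), then the shifted measure satisfies N(x + δ, σ²I)(A) ≤ Φ(b + ‖δ‖₂/σ). -/

import Mathlib

open MeasureTheory ProbabilityTheory

/-- The standard Gaussian CDF `Φ`. -/
noncomputable def Phi (a : ℝ) : ℝ := ((gaussianReal 0 1) (Set.Iic a)).toReal

/-- The isotropic Gaussian measure `N(x, σ²I)` on `ℝ^m`. -/
noncomputable def gaussPi (m : ℕ) (σ : ℝ) (x : EuclideanSpace ℝ (Fin m)) :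
    Measure (EuclideanSpace ℝ (Fin m)) :=
  Measure.map (MeasurableEquiv.toLp 2 (Fin m → ℝ))
    (Measure.pi fun i => gaussianReal (x i) ⟨σ ^ 2, sq_nonneg σ⟩)

/-!
After the change of variables `y = x + σ z` both measures are images of the standard Gaussian `γ`,
and the claim becomes `γ.map (· + v) A ≤ Φ(b + ‖v‖)` whenever `γ A ≤ Φ(b)`, with `v = δ / σ`.
By Cameron–Martin, `γ.map (· + v)` has density `exp(⟪v, z⟫ - ‖v‖² / 2)` with respect to `γ`,
an increasing function of the statistic `⟪v / ‖v‖, z⟫`, which is standard Gaussian under `γ`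
and `N(‖v‖, 1)` under `γ.map (· + v)`. Moving mass of `A` from where the statistic is below a
threshold to where it is above can only increase the integral of such a density
(Neyman–Pearson), so the half-space `{⟪v / ‖v‖, z⟫ ≥ -b}`, of `γ`-measure `Φ(b)`, has at least
the shifted measure of `A`; its shifted measure is `Φ(b + ‖v‖)`.
-/

open scoped ENNReal NNReal RealInnerProductSpace

namespace MeasureTheory

section Pi

variable {ι : Type*} [Fintype ι] {α : ι → Type*} [∀ i, MeasurableSpace (α i)]
  {μ : ∀ i, Measure (α i)} [∀ i, IsProbabilityMeasure (μ i)] {f : ∀ i, α i → ℝ≥0∞}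

theorem lintegral_fintype_prod_eq_prod (hf : ∀ i, Measurable (f i)) :
    ∫⁻ y, ∏ i, f i (y i) ∂Measure.pi μ = ∏ i, ∫⁻ t, f i t ∂μ i :=
  (lintegral_prod_eq_prod_lintegral_of_indepFun Finset.univ (fun i (y : ∀ i, α i) ↦ f i (y i))
    (iIndepFun_pi fun i ↦ (hf i).aemeasurable) fun i ↦ (hf i).comp (measurable_pi_apply i)).trans
    (Finset.prod_congr rfl fun i _ ↦ (measurePreserving_eval μ i).lintegral_comp (hf i))

theorem Measure.pi_withDensity (hf : ∀ i, Measurable (f i))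
    [∀ i, SigmaFinite ((μ i).withDensity (f i))] :
    Measure.pi (fun i ↦ (μ i).withDensity (f i))
      = (Measure.pi μ).withDensity fun y ↦ ∏ i, f i (y i) := by
  classical
  refine Measure.pi_eq fun s hs ↦ ?_
  have hbox : (Set.univ.pi s).indicator (fun y ↦ ∏ i, f i (y i))
      = fun y ↦ ∏ i, (s i).indicator (f i) (y i) := by
    ext y
    simp [Set.indicator_apply, Finset.prod_ite_zero]
  rw [withDensity_apply _ (.univ_pi hs), ← lintegral_indicator (.univ_pi hs), hbox,
    lintegral_fintype_prod_eq_prod fun i ↦ (hf i).indicator (hs i)]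
  exact Finset.prod_congr rfl fun i _ ↦ by
    rw [withDensity_apply _ (hs i), lintegral_indicator (hs i)]

end Pi

theorem _root_.MeasurableEmbedding.map_withDensity_comp {α β : Type*} [MeasurableSpace α]
    [MeasurableSpace β] {e : α → β} (he : MeasurableEmbedding e) (μ : Measure α)
    (f : β → ℝ≥0∞) :
    (μ.withDensity (f ∘ e)).map e = (μ.map e).withDensity f := by
  ext s hs
  rw [withDensity_apply _ hs, he.restrict_map, he.lintegral_map,
    Measure.map_apply he.measurable hs, withDensity_apply _ (he.measurable hs)]
  rfl

theorem withDensity_apply_le_of_threshold {α : Type*} [MeasurableSpace α] {μ : Measure α}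
    [IsFiniteMeasure μ] {f : α → ℝ≥0∞} {A H : Set α} (hA : MeasurableSet A)
    (hH : MeasurableSet H) (hμ : μ A ≤ μ H) (K : ℝ≥0∞) (hAH : ∀ y ∈ A \ H, f y ≤ K)
    (hHA : ∀ y ∈ H \ A, K ≤ f y) :
    μ.withDensity f A ≤ μ.withDensity f H := by
  have hdiff : μ (A \ H) ≤ μ (H \ A) := by
    refine ENNReal.le_of_add_le_add_right (measure_ne_top μ (A ∩ H)) ?_
    rwa [measure_sdiff_add_inter A hH, Set.inter_comm, measure_sdiff_add_inter H hA]
  set ν := μ.withDensity f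
  have hmoved : ν (A \ H) ≤ ν (H \ A) := calc
    ν (A \ H) = ∫⁻ y in A \ H, f y ∂μ := withDensity_apply _ (hA.diff hH)
    _ ≤ ∫⁻ _ in A \ H, K ∂μ := setLIntegral_mono' (hA.diff hH) hAH
    _ = K * μ (A \ H) := setLIntegral_const _ _
    _ ≤ K * μ (H \ A) := by gcongr
    _ = ∫⁻ _ in H \ A, K ∂μ := (setLIntegral_const _ _).symm
    _ ≤ ∫⁻ y in H \ A, f y ∂μ := setLIntegral_mono' (hH.diff hA) hHA
    _ = ν (H \ A) := (withDensity_apply _ (hH.diff hA)).symm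
  calc ν A = ν (A ∩ H) + ν (A \ H) := (measure_inter_add_sdiff A hH).symm
    _ ≤ ν (H ∩ A) + ν (H \ A) := by rw [Set.inter_comm]; gcongr
    _ = ν H := measure_inter_add_sdiff H hA

end MeasureTheory

namespace ProbabilityTheory

theorem gaussianReal_add_eq_withDensity (μ d : ℝ) {v : ℝ≥0} (hv : v ≠ 0) :
    gaussianReal (μ + d) v = (gaussianReal μ v).withDensity
      fun t ↦ ENNReal.ofReal (Real.exp ((d * (t - μ) - d ^ 2 / 2) / v)) := by
  rw [gaussianReal_of_var_ne_zero _ hv, gaussianReal_of_var_ne_zero _ hv,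
    ← withDensity_mul _ (measurable_gaussianPDF _ _) (by fun_prop)]
  congr 1
  ext t
  simp only [Pi.mul_apply, gaussianPDF, gaussianPDFReal]
  rw [← ENNReal.ofReal_mul (by positivity), mul_assoc _ (Real.exp _), ← Real.exp_add]
  congr 3
  field_simp
  ring

theorem gaussianReal_one_Ici_neg (μ r : ℝ) :
    gaussianReal μ 1 (Set.Ici (-r)) = ENNReal.ofReal (Phi (r + μ)) := by
  have hμ : (gaussianReal 0 1).map (μ - ·) = gaussianReal μ 1 := by
    simpa using gaussianReal_map_const_sub (μ := 0) (v := 1) μ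
  have hpre : (μ - ·) ⁻¹' Set.Ici (-r) = Set.Iic (r + μ) := by
    ext t
    simp only [Set.mem_preimage, Set.mem_Ici, Set.mem_Iic]
    constructor <;> intro <;> linarith
  rw [Phi, ENNReal.ofReal_toReal (measure_ne_top _ _), ← hμ,
    Measure.map_apply (by fun_prop) measurableSet_Ici, hpre]

theorem stdGaussian_map_inner {E : Type*} [NormedAddCommGroup E] [InnerProductSpace ℝ E]
    [FiniteDimensional ℝ E] [MeasurableSpace E] [BorelSpace E] (u : E) :
    (stdGaussian E).map (fun z ↦ ⟪u, z⟫) = gaussianReal 0 (‖u‖₊ ^ 2) := by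
  have := IsGaussian.map_eq_gaussianReal (μ := stdGaussian E) (innerSL ℝ u)
  rw [integral_strongDual_stdGaussian, variance_dual_stdGaussian, innerSL_apply_norm] at this
  convert this using 2
  · ext; simp
  · rw [Real.toNNReal_pow (norm_nonneg u), norm_toNNReal]

section Euclidean

variable {ι : Type*} [Fintype ι]

theorem stdGaussian_map_add_eq_withDensity (v : EuclideanSpace ℝ ι) :
    (stdGaussian (EuclideanSpace ℝ ι)).map (· + v)
      = (stdGaussian _).withDensity fun z ↦ ENNReal.ofReal (Real.exp (⟪v, z⟫ - ‖v‖ ^ 2 / 2)) := by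
  set ρ : ι → ℝ → ℝ≥0∞ := fun i t ↦ ENNReal.ofReal (Real.exp (v i * t - v i ^ 2 / 2))
  have hρ : ∀ i, Measurable (ρ i) := fun i ↦ by fun_prop
  have h1D : ∀ i, (gaussianReal 0 1).map (· + v i) = (gaussianReal 0 1).withDensity (ρ i) := by
    intro i
    rw [gaussianReal_map_add_const, gaussianReal_add_eq_withDensity 0 (v i) one_ne_zero]
    simp [ρ]
  have : ∀ i, SigmaFinite ((gaussianReal 0 1).withDensity (ρ i)) := fun i ↦
    SigmaFinite.withDensity_of_ne_top (ae_of_all _ fun _ ↦ ENNReal.ofReal_ne_top)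
  have hdensity : ∀ y : ι → ℝ, ∏ i, ρ i (y i)
      = ENNReal.ofReal (Real.exp (⟪v, WithLp.toLp 2 y⟫ - ‖v‖ ^ 2 / 2)) := by
    intro y
    rw [← ENNReal.ofReal_prod_of_nonneg fun i _ ↦ (Real.exp_pos _).le, ← Real.exp_sum,
      Finset.sum_sub_distrib, ← Finset.sum_div, EuclideanSpace.real_norm_sq_eq, PiLp.inner_apply]
    simp [mul_comm]
  have hshift : (· + v) ∘ WithLp.toLp 2 = WithLp.toLp 2 ∘ fun (y : ι → ℝ) i ↦ y i + v i := rfl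
  rw [← map_pi_eq_stdGaussian, Measure.map_map (by fun_prop) (by fun_prop), hshift,
    ← Measure.map_map (by fun_prop) (by fun_prop),
    Measure.pi_map_pi fun i ↦ (measurable_add_const (v i)).aemeasurable,
    funext h1D, Measure.pi_withDensity hρ, funext hdensity]
  exact (MeasurableEquiv.toLp 2 (ι → ℝ)).measurableEmbedding.map_withDensity_comp
    (Measure.pi fun _ ↦ gaussianReal 0 1) fun z ↦ ENNReal.ofReal (Real.exp (⟪v, z⟫ - ‖v‖ ^ 2 / 2))

theorem stdGaussian_map_add_apply_le (v : EuclideanSpace ℝ ι) {A : Set (EuclideanSpace ℝ ι)}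
    (hA : MeasurableSet A) {b : ℝ} (h : stdGaussian _ A ≤ ENNReal.ofReal (Phi b)) :
    (stdGaussian _).map (· + v) A ≤ ENNReal.ofReal (Phi (b + ‖v‖)) := by
  rcases eq_or_ne v 0 with rfl | hv
  · simpa using h
  set γ := stdGaussian (EuclideanSpace ℝ ι)
  set u := ‖v‖⁻¹ • v
  have hu : ‖u‖ = 1 := norm_smul_inv_norm hv
  have hvu : ∀ z, ⟪v, z⟫ = ‖v‖ * ⟪u, z⟫ := fun z ↦ by
    rw [real_inner_smul_left, mul_inv_cancel_left₀ (norm_ne_zero_iff.mpr hv)]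
  have huv : ⟪u, v⟫ = ‖v‖ := by
    rw [real_inner_smul_left, real_inner_self_eq_norm_sq, sq,
      inv_mul_cancel_left₀ (norm_ne_zero_iff.mpr hv)]
  set S : EuclideanSpace ℝ ι → ℝ := fun z ↦ ⟪u, z⟫
  have hS : Measurable S := by fun_prop
  have hlaw : γ.map S = gaussianReal 0 1 := by
    rw [stdGaussian_map_inner]
    congr
    ext
    simp [hu]
  have hlaw_shift : (γ.map (· + v)).map S = gaussianReal ‖v‖ 1 := by
    have hS_shift : S ∘ (· + v) = (· + ‖v‖) ∘ S := by
      ext z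
      simp only [S, Function.comp_apply, inner_add_right, huv]
    rw [Measure.map_map hS (by fun_prop), hS_shift, ← Measure.map_map (by fun_prop) hS, hlaw,
      gaussianReal_map_add_const, zero_add]
  set H := S ⁻¹' Set.Ici (-b)
  have hH : MeasurableSet H := hS measurableSet_Ici
  have hγH : γ H = ENNReal.ofReal (Phi b) := by
    rw [← Measure.map_apply hS measurableSet_Ici, hlaw, gaussianReal_one_Ici_neg, add_zero]
  have hγ_shift_H : γ.map (· + v) H = ENNReal.ofReal (Phi (b + ‖v‖)) := by
    rw [← Measure.map_apply hS measurableSet_Ici, hlaw_shift, gaussianReal_one_Ici_neg]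
  rw [← hγ_shift_H, stdGaussian_map_add_eq_withDensity]
  refine withDensity_apply_le_of_threshold hA hH (h.trans hγH.ge)
    (ENNReal.ofReal (Real.exp (‖v‖ * (-b) - ‖v‖ ^ 2 / 2))) ?_ ?_
  · rintro z ⟨-, hz⟩
    rw [hvu]
    gcongr
    exact (lt_of_not_ge hz).le
  · rintro z ⟨hz, -⟩
    rw [hvu]
    gcongr
    exact hz

end Euclidean

end ProbabilityTheory

theorem gaussPi_eq_map_stdGaussian (m : ℕ) (σ : ℝ) (x : EuclideanSpace ℝ (Fin m)) :
    gaussPi m σ x = (stdGaussian _).map (fun z ↦ x + σ • z) := by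
  have h1D : ∀ i, (gaussianReal 0 1).map (fun t ↦ x i + σ * t)
      = gaussianReal (x i) (⟨σ ^ 2, sq_nonneg σ⟩ : ℝ≥0) := by
    intro i
    rw [show (fun t ↦ x i + σ * t) = (x i + ·) ∘ (σ * ·) from rfl,
      ← Measure.map_map (measurable_const_add _) (measurable_const_mul _),
      gaussianReal_map_const_mul, gaussianReal_map_const_add]
    simp only [mul_zero, zero_add, mul_one]
    rfl
  have hshift : (fun z ↦ x + σ • z) ∘ WithLp.toLp 2
      = WithLp.toLp 2 ∘ fun (y : Fin m → ℝ) i ↦ x i + σ * y i := rfl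
  rw [gaussPi, ← map_pi_eq_stdGaussian, Measure.map_map (by fun_prop) (by fun_prop), hshift,
    ← Measure.map_map (by fun_prop) (by fun_prop),
    Measure.pi_map_pi (f := fun i t ↦ x i + σ * t) fun i ↦ (by fun_prop), funext h1D]
  rfl

/-- Neyman–Pearson upper bound: if `N(x, σ²I)(A) ≤ Φ(b)` then
`N(x + δ, σ²I)(A) ≤ Φ(b + ‖δ‖₂/σ)`. -/
theorem gaussian_shift_upper_bound (m : ℕ) (σ : ℝ) (hσ : 0 < σ)
    (x δ : EuclideanSpace ℝ (Fin m)) (b : ℝ)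
    (A : Set (EuclideanSpace ℝ (Fin m))) (hA : MeasurableSet A)
    (h : gaussPi m σ x A ≤ ENNReal.ofReal (Phi b)) :
    gaussPi m σ (x + δ) A ≤ ENNReal.ofReal (Phi (b + ‖δ‖ / σ)) := by
  set T : EuclideanSpace ℝ (Fin m) → EuclideanSpace ℝ (Fin m) := fun z ↦ x + σ • z
  have hT : Measurable T := by fun_prop
  have hshift : (fun z ↦ x + δ + σ • z) = T ∘ (· + σ⁻¹ • δ) := by
    ext1 z
    simp only [T, Function.comp_apply, smul_add, smul_inv_smul₀ hσ.ne']
    abel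
  have hnorm : ‖σ⁻¹ • δ‖ = ‖δ‖ / σ := by
    rw [norm_smul, norm_inv, Real.norm_of_nonneg hσ.le, inv_mul_eq_div]
  rw [gaussPi_eq_map_stdGaussian, Measure.map_apply hT hA] at h
  rw [gaussPi_eq_map_stdGaussian, hshift, ← Measure.map_map hT (by fun_prop),
    Measure.map_apply hT hA, ← hnorm]
  exact stdGaussian_map_add_apply_le _ (hT hA) h
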